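/- arXiv:1103.5250 — 4 statements merged into one kernel-verified Lean document; each statement's English description precedes it below -/
import Mathlib

section
/- Let A be a real n×n matrix that is diagonalizable with real eigenvalues: A·Rᵢ = λⁱ·Rᵢ for a basis R₁,…,Rₙ of ℝⁿ. Let H be a symmetric n×n matrix. Then H·A is symmetric if and only if for every pair i ≠ j, either λⁱ = λʲ or Rᵢᵀ·H·Rⱼ = 0. -/
open Matrix

lemma symm_dot {n : ℕ} {M : Matrix (Fin n) (Fin n) ℝ} (hM : M.IsSymm)
    (x y : Fin n → ℝ) : x ⬝ᵥ M.mulVec y = y ⬝ᵥ M.mulVec x := by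
  rw [dotProduct_mulVec, ← mulVec_transpose, hM.eq, dotProduct_comm]

/-- For a diagonalizable real matrix `A` with eigenbasis `R` and symmetric `H`,
`H·A` is symmetric iff for every `i ≠ j` either the eigenvalues coincide or the
eigenvectors are `H`-orthogonal. -/
theorem stmt1 {n : ℕ} (A H : Matrix (Fin n) (Fin n) ℝ)
    (R : Fin n → Fin n → ℝ) (lam : Fin n → ℝ)
    (hbasis : LinearIndependent ℝ R)
    (heig : ∀ i, A.mulVec (R i) = lam i • R i)
    (hH : H.IsSymm) :
    (H * A).IsSymm ↔ ∀ i j, i ≠ j → (lam i = lam j ∨ R i ⬝ᵥ H.mulVec (R j) = 0) := by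
  have hdot : ∀ i j, R i ⬝ᵥ (H * A).mulVec (R j) = lam j * (R i ⬝ᵥ H.mulVec (R j)) := by
    intro i j
    rw [← mulVec_mulVec, heig j, mulVec_smul, dotProduct_smul, smul_eq_mul]
  constructor
  · intro hsym i j hij
    by_cases hl : lam i = lam j
    · exact Or.inl hl
    · right
      have h1 := symm_dot hsym (R i) (R j)
      rw [hdot i j, hdot j i, symm_dot hH (R j) (R i)] at h1
      have : (lam j - lam i) * (R i ⬝ᵥ H.mulVec (R j)) = 0 := by ring_nf; linarith
      rcases mul_eq_zero.mp this with h | h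
      · exact absurd (by linarith [sub_eq_zero.mp h]) hl
      · exact h
  · intro hcond
    -- basis facts
    have htop : Submodule.span ℝ (Set.range R) = ⊤ :=
      hbasis.span_eq_top_of_card_eq_finrank' (by simp)
    set M := H * A with hM
    have hbase : ∀ i j, R i ⬝ᵥ M.mulVec (R j) = R j ⬝ᵥ M.mulVec (R i) := by
      intro i j
      rcases eq_or_ne i j with rfl | hij
      · rfl
      · rw [hdot i j, hdot j i, symm_dot hH (R j) (R i)]
        rcases hcond i j hij with h | h
        · rw [h]
        · rw [h, mul_zero, mul_zero]
    have hall : ∀ x y : Fin n → ℝ, x ⬝ᵥ M.mulVec y = y ⬝ᵥ M.mulVec x := by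
      have hmem : ∀ v : Fin n → ℝ, v ∈ Submodule.span ℝ (Set.range R) := by
        intro v; rw [htop]; trivial
      intro x y
      induction hmem x using Submodule.span_induction with
      | mem x hx =>
        obtain ⟨i, rfl⟩ := hx
        induction hmem y using Submodule.span_induction with
        | mem y hy => obtain ⟨j, rfl⟩ := hy; exact hbase i j
        | zero => simp
        | add a b _ _ ha hb => simp [mulVec_add, dotProduct_add, add_dotProduct, ha, hb]
        | smul c a _ ha => simp [mulVec_smul, dotProduct_smul, smul_dotProduct, ha]
      | zero => simp
      | add a b _ _ ha hb => simp [mulVec_add, dotProduct_add, add_dotProduct, ha, hb]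
      | smul c a _ ha => simp [mulVec_smul, dotProduct_smul, smul_dotProduct, ha]
    -- conclude entrywise
    ext i j
    have := hall (Pi.single j 1) (Pi.single i 1)
    simpa [transpose_apply, dotProduct, mulVec, Pi.single_apply, Finset.mul_sum,
      mul_comm, mul_left_comm] using this
end

section
/- For a frame of three vector fields with Christoffel symbols Γᵏᵢⱼ and structure coefficients cᵏᵢⱼ = Γᵏᵢⱼ − Γᵏⱼᵢ on Ω ⊆ ℝ³, define the 3×3 matrices A_λ = [[c¹₂₃, Γ¹₃₂, −Γ¹₂₃],[Γ²₃₁, c²₁₃, −Γ²₁₃],[Γ³₂₁, −Γ³₁₂, c³₁₂]] and A_β = [[c¹₂₃, −Γ²₃₁, Γ³₂₁],[−Γ¹₃₂, c²₁₃, Γ³₁₂],[−Γ¹₂₃, Γ²₁₃, c³₁₂]]. Then A_λ = D·A_βᵀ·D where D = diag(1, −1, 1). Consequently rank(A_λ) = rank(A_β) ≤ 2. -/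
/-!
Up to the signs `D = diag(1, -1, 1)`, `A_λ` is the transpose of `A_β`, and conjugating by the
invertible `D` and transposing preserve rank. Since `cᵏᵢⱼ = Γᵏᵢⱼ - Γᵏⱼᵢ`, every row of `A_λ`
sums to zero, so `(1, 1, 1)` lies in its kernel and its rank is at most `2`.
-/

open Matrix

namespace Matrix

variable {n K : Type*} [Fintype n] [Field K]

theorem rank_lt_card_of_mulVec_eq_zero {A : Matrix n n K} {v : n → K} (hv : v ≠ 0)
    (hAv : A *ᵥ v = 0) : A.rank < Fintype.card n := by
  have hker : 0 < Module.finrank K (LinearMap.ker A.mulVecLin) :=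
    Module.finrank_pos_iff_exists_ne_zero.mpr ⟨⟨v, hAv⟩, by simpa [Subtype.ext_iff] using hv⟩
  have hsum := LinearMap.finrank_range_add_finrank_ker A.mulVecLin
  rw [Module.finrank_fintype_fun_eq_card] at hsum
  have hrank : A.rank = Module.finrank K (LinearMap.range A.mulVecLin) := rfl
  omega

theorem rank_mul_transpose_mul_of_isUnit_det [DecidableEq n] {D : Matrix n n K}
    (hD : IsUnit D.det) (B : Matrix n n K) : (D * Bᵀ * D).rank = B.rank := by
  rw [rank_mul_eq_left_of_isUnit_det D _ hD, rank_mul_eq_right_of_isUnit_det D _ hD,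
    rank_transpose]

end Matrix

section ChristoffelMatrices

variable {R : Type*} [CommRing R] (Γ c : Fin 3 → Fin 3 → Fin 3 → R)

def lambdaMatrix : Matrix (Fin 3) (Fin 3) R :=
  !![c 0 1 2, Γ 0 2 1, -Γ 0 1 2;
     Γ 1 2 0, c 1 0 2, -Γ 1 0 2;
     Γ 2 1 0, -Γ 2 0 1, c 2 0 1]

def betaMatrix : Matrix (Fin 3) (Fin 3) R :=
  !![c 0 1 2, -Γ 1 2 0, Γ 2 1 0;
     -Γ 0 2 1, c 1 0 2, Γ 2 0 1;
     -Γ 0 1 2, Γ 1 0 2, c 2 0 1]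

theorem lambdaMatrix_eq_diagonal_mul_transpose_betaMatrix_mul_diagonal :
    lambdaMatrix Γ c =
      diagonal ![1, -1, 1] * (betaMatrix Γ c)ᵀ * diagonal ![1, -1, 1] := by
  ext i j
  fin_cases i <;> fin_cases j <;>
    simp [lambdaMatrix, betaMatrix, mul_apply, diagonal]

theorem lambdaMatrix_mulVec_one (hc : ∀ k i j, c k i j = Γ k i j - Γ k j i) :
    lambdaMatrix Γ c *ᵥ (fun _ => 1) = 0 := by
  ext i
  fin_cases i <;> simp [lambdaMatrix, mulVec, dotProduct, Fin.sum_univ_three, hc]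
  ring

end ChristoffelMatrices

/-- The algebraic parts of the λ- and β-systems for `n = 3`:
`A_λ = D·A_βᵀ·D` with `D = diag(1,−1,1)`; hence `rank A_λ = rank A_β ≤ 2`.
Indices: `Γ k i j` stands for `Γ^k_{ij}` (with `1,2,3` rendered as `0,1,2`). -/
theorem stmt11 (Γ : Fin 3 → Fin 3 → Fin 3 → ℝ) (c : Fin 3 → Fin 3 → Fin 3 → ℝ)
    (hc : ∀ k i j, c k i j = Γ k i j - Γ k j i)
    (Alam Abet D : Matrix (Fin 3) (Fin 3) ℝ)
    (hAlam : Alam = !![c 0 1 2, Γ 0 2 1, -Γ 0 1 2;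
                   Γ 1 2 0, c 1 0 2, -Γ 1 0 2;
                   Γ 2 1 0, -Γ 2 0 1, c 2 0 1])
    (hAbet : Abet = !![c 0 1 2, -Γ 1 2 0, Γ 2 1 0;
                   -Γ 0 2 1, c 1 0 2, Γ 2 0 1;
                   -Γ 0 1 2, Γ 1 0 2, c 2 0 1])
    (hD : D = Matrix.diagonal ![1, -1, 1]) :
    Alam = D * Abetᵀ * D ∧ Alam.rank = Abet.rank ∧ Alam.rank ≤ 2 := by
  change Alam = lambdaMatrix Γ c at hAlam
  change Abet = betaMatrix Γ c at hAbet
  subst hAlam hAbet hD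
  have hconj := lambdaMatrix_eq_diagonal_mul_transpose_betaMatrix_mul_diagonal Γ c
  have hDdet : IsUnit (diagonal ![(1 : ℝ), -1, 1]).det := by
    simp [det_diagonal, Fin.prod_univ_three]
  have hlt := rank_lt_card_of_mulVec_eq_zero (one_ne_zero (α := Fin 3 → ℝ))
    (lambdaMatrix_mulVec_one Γ c hc)
  refine ⟨hconj, ?_, ?_⟩
  · rw [hconj, rank_mul_transpose_mul_of_isUnit_det hDdet]
  · simp only [Fintype.card_fin] at hlt
    omega
end

section
/- Let i, j, k be distinct indices and suppose λⁱ, λʲ, λᵏ ∈ ℝ are pairwise distinct. Let Γ and c satisfy Γᵏⱼᵢ = Γᵏᵢⱼ − cᵏᵢⱼ (symmetry of torsion-free connection) and the algebraic λ-relations (λⁱ−λᵏ)Γᵏⱼᵢ = (λʲ−λᵏ)Γᵏᵢⱼ (for all cyclic relabelings), and suppose βⁱ, βʲ, βᵏ satisfy the algebraic β-relation βᵏ·cᵏᵢⱼ + βʲ·Γʲᵢₖ − βⁱ·Γⁱⱼₖ = 0. Then the identity cⁱⱼₖβⁱ/(λʲ−λᵏ) + cʲₖᵢβʲ/(λᵏ−λⁱ)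 + cᵏᵢⱼβᵏ/(λⁱ−λʲ) = 0 holds. -/
/-- Under strict hyperbolicity, the algebraic λ-relations together with the
algebraic β-relation imply Sévennec's identity
`cⁱⱼₖβⁱ/(λʲ−λᵏ) + cʲₖᵢβʲ/(λᵏ−λⁱ) + cᵏᵢⱼβᵏ/(λⁱ−λʲ) = 0`,
where `cᵏᵢⱼ = Γᵏᵢⱼ − Γᵏⱼᵢ`. -/
theorem stmt12 (li lj lk βi βj βk : ℝ)
    (Γkij Γkji Γjik Γjki Γijk Γikj : ℝ)
    (hij : li ≠ lj) (hjk : lj ≠ lk) (hik : li ≠ lk)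
    (hlam1 : (li - lk) * Γkji = (lj - lk) * Γkij)
    (hlam2 : (lj - li) * Γikj = (lk - li) * Γijk)
    (hlam3 : (lk - lj) * Γjik = (li - lj) * Γjki)
    (hβ : βk * (Γkij - Γkji) + βj * Γjik - βi * Γijk = 0) :
    (Γijk - Γikj) * βi / (lj - lk) +
      (Γjki - Γjik) * βj / (lk - li) +
      (Γkij - Γkji) * βk / (li - lj) = 0 := by
  have h1 : lj - lk ≠ 0 := sub_ne_zero.mpr hjk
  have h2 : lk - li ≠ 0 := sub_ne_zero.mpr (Ne.symm hik)
  have h3 : li - lj ≠ 0 := sub_ne_zero.mpr hij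
  field_simp
  linear_combination (βi * (lk - li)) * hlam2 + (βj * (lk - lj)) * hlam3 +
    ((li - lk) * (lk - lj)) * hβ
end

section
/- For the Euler eigen-frame R₁ = (1, √(−p_v), 0)ᵀ, R₂ = (−p_S, 0, p_v)ᵀ, R₃ = (1, −√(−p_v), 0)ᵀ (with p_v < 0), any scalar field of the form η(v,u,S) = C₁v + C₂u + C₃(ε(v,S) + u²/2) + H(S), where p = −ε_v, satisfies the orthogonality conditions RᵢᵀD²η Rⱼ = 0 for all i ≠ j. -/
/-!
`D²η` is `C₃` times the Hessian of `ε(v,S) + u²/2`, plus `H''(S)` in the `(S,S)` slot; by Schwarz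
it is `[[C₃ε_vv, 0, C₃ε_vS], [0, C₃, 0], [C₃ε_vS, 0, *]]`. Since `R₁` and `R₃` have no
`S`-component the unknown `(S,S)` entry never meets a pair `i ≠ j`, and the remaining terms cancel
because `√ε_vv² = ε_vv`.
-/

open Matrix

noncomputable def hmat {n : ℕ} (η : (Fin n → ℝ) → ℝ) (u : Fin n → ℝ) :
    Matrix (Fin n) (Fin n) ℝ :=
  Matrix.of fun i j => fderiv ℝ (fun w => fderiv ℝ η w (Pi.single i 1)) u (Pi.single j 1)

theorem fderiv_fderiv_apply_comm {E F : Type*} [NormedAddCommGroup E] [NormedSpace ℝ E]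
    [NormedAddCommGroup F] [NormedSpace ℝ F] {f : E → F} (hf : ContDiff ℝ 2 f) (x u v : E) :
    fderiv ℝ (fun y => fderiv ℝ f y u) x v = fderiv ℝ (fun y => fderiv ℝ f y v) x u := by
  have hf' : Differentiable ℝ (fderiv ℝ f) := (hf.fderiv_right le_rfl).differentiable one_ne_zero
  have hflip : ∀ u v, fderiv ℝ (fun y => fderiv ℝ f y u) x v = fderiv ℝ (fderiv ℝ f) x v u := by
    intro u v
    simp [fderiv_clm_apply (hf' x) (differentiableAt_const u)]
  rw [hflip, hflip]
  exact (hf.contDiffAt.isSymmSndFDerivAt (by simp)).eq v u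

namespace Euler

-- `R₁, R₂, R₃` with `a = -p_v = ε_vv` and `b = -p_S = ε_vS`.
noncomputable def frame (a b : ℝ) : Fin 3 → Fin 3 → ℝ :=
  ![![1, √a, 0], ![b, 0, -a], ![1, -√a, 0]]

theorem frame_dotProduct_mulVec_eq_zero {a b c d : ℝ} (ha : 0 ≤ a) {i j : Fin 3} (hij : i ≠ j) :
    frame a b i ⬝ᵥ !![c * a, 0, c * b; 0, c, 0; c * b, 0, d] *ᵥ frame a b j = 0 := by
  fin_cases i <;> fin_cases j <;> simp [frame, dotProduct, mulVec, Fin.sum_univ_three] at hij ⊢ <;>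
    ring_nf <;> simp [Real.sq_sqrt ha]

noncomputable def eta (ε : ℝ × ℝ → ℝ) (H : ℝ → ℝ) (C1 C2 C3 : ℝ) (w : Fin 3 → ℝ) : ℝ :=
  C1 * w 0 + C2 * w 1 + C3 * (ε (w 0, w 2) + w 1 ^ 2 / 2) + H (w 2)

variable {ε : ℝ × ℝ → ℝ} {H : ℝ → ℝ} (C1 C2 C3 : ℝ)

theorem hasFDerivAt_apply_zero_two (w : Fin 3 → ℝ) :
    HasFDerivAt (fun w : Fin 3 → ℝ => (w 0, w 2))
      ((ContinuousLinearMap.proj (R := ℝ) (φ := fun _ : Fin 3 => ℝ) 0).prod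
        (ContinuousLinearMap.proj 2)) w :=
  (hasFDerivAt_apply 0 w).prodMk (hasFDerivAt_apply 2 w)

theorem fderiv_eta_apply (hε : Differentiable ℝ ε) (hH : Differentiable ℝ H) (w u : Fin 3 → ℝ) :
    fderiv ℝ (eta ε H C1 C2 C3) w u = C1 * u 0 + C2 * u 1
      + C3 * (fderiv ℝ ε (w 0, w 2) (u 0, u 2) + w 1 * u 1) + deriv H (w 2) * u 2 := by
  have hp := fun i => hasFDerivAt_apply (𝕜 := ℝ) (F' := fun _ : Fin 3 => ℝ) i w
  have hsq : HasDerivAt (fun t : ℝ => t ^ 2 / 2) (w 1) (w 1) := by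
    simpa using (hasDerivAt_pow 2 (w 1)).div_const 2
  have h := ((((hp 0).const_mul C1).add ((hp 1).const_mul C2)).add
    ((((hε _).hasFDerivAt.comp w (hasFDerivAt_apply_zero_two w)).add
      (hsq.comp_hasFDerivAt w (hp 1))).const_mul C3)).add
    ((hH _).hasDerivAt.comp_hasFDerivAt w (hp 2))
  erw [h.fderiv]
  simp only [smul_add, _root_.add_apply, _root_.smul_apply,
    ContinuousLinearMap.proj_apply, smul_eq_mul, ContinuousLinearMap.comp_apply,
    ContinuousLinearMap.prod_apply]
  ring

theorem fderiv_fderiv_eta_apply (hε : ContDiff ℝ 2 ε) (hH : ContDiff ℝ 2 H) (w u v : Fin 3 → ℝ) :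
    fderiv ℝ (fun w => fderiv ℝ (eta ε H C1 C2 C3) w u) w v =
      C3 * (fderiv ℝ (fun y => fderiv ℝ ε y (u 0, u 2)) (w 0, w 2) (v 0, v 2) + u 1 * v 1)
        + deriv (deriv H) (w 2) * u 2 * v 2 := by
  have hε2 : Differentiable ℝ (fun y => fderiv ℝ ε y (u 0, u 2)) :=
    ((hε.fderiv_right le_rfl).differentiable one_ne_zero).clm_apply (differentiable_const _)
  have hH2 : Differentiable ℝ (deriv H) :=
    (hH.deriv' (n := 1)).differentiable one_ne_zero
  have hp := fun i => hasFDerivAt_apply (𝕜 := ℝ) (F' := fun _ : Fin 3 => ℝ) i w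
  have h := (((((hε2 _).hasFDerivAt.comp w (hasFDerivAt_apply_zero_two w)).add
      ((hp 1).mul_const (u 1))).const_mul C3).const_add (C1 * u 0 + C2 * u 1)).add
    (((hH2 _).hasDerivAt.comp_hasFDerivAt w (hp 2)).mul_const (u 2))
  simp_rw [fderiv_eta_apply C1 C2 C3 (hε.differentiable two_ne_zero)
    (hH.differentiable two_ne_zero)]
  erw [h.fderiv]
  simp only [smul_add, _root_.add_apply, _root_.smul_apply,
    ContinuousLinearMap.proj_apply, smul_eq_mul, ContinuousLinearMap.comp_apply,
    ContinuousLinearMap.prod_apply]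
  ring

theorem hmat_eta (hε : ContDiff ℝ 2 ε) (hH : ContDiff ℝ 2 H) (w : Fin 3 → ℝ) :
    hmat (eta ε H C1 C2 C3) w =
      !![C3 * fderiv ℝ (fun y => fderiv ℝ ε y (1, 0)) (w 0, w 2) (1, 0), 0,
          C3 * fderiv ℝ (fun y => fderiv ℝ ε y (1, 0)) (w 0, w 2) (0, 1);
        0, C3, 0;
        C3 * fderiv ℝ (fun y => fderiv ℝ ε y (1, 0)) (w 0, w 2) (0, 1), 0,
          C3 * fderiv ℝ (fun y => fderiv ℝ ε y (0, 1)) (w 0, w 2) (0, 1)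
            + deriv (deriv H) (w 2)] := by
  ext i j
  fin_cases i <;> fin_cases j <;>
    simp [hmat, fderiv_fderiv_eta_apply C1 C2 C3 hε hH, fderiv_fderiv_apply_comm hε _ (0, 1),
      Prod.mk_zero_zero]

end Euler

/-- For the Euler eigen-frame (with `p = −ε_v`, so `−p_v = ε_vv`, `−p_S = ε_vS`),
any `η(v,u,S) = C₁v + C₂u + C₃(ε(v,S) + u²/2) + H(S)` satisfies the
orthogonality relations `RᵢᵀD²ηRⱼ = 0` for `i ≠ j`. -/
theorem stmt15 (ε : ℝ × ℝ → ℝ) (hε : ContDiff ℝ 3 ε)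
    (H : ℝ → ℝ) (hH : ContDiff ℝ 2 H) (C1 C2 C3 : ℝ)
    (εvv εvS : ℝ × ℝ → ℝ)
    (hεvv : ∀ x, εvv x = fderiv ℝ (fun y => fderiv ℝ ε y (1, 0)) x (1, 0))
    (hεvS : ∀ x, εvS x = fderiv ℝ (fun y => fderiv ℝ ε y (1, 0)) x (0, 1))
    (hpv : ∀ x, 0 < εvv x)
    (η : (Fin 3 → ℝ) → ℝ)
    (hηdef : ∀ w, η w = C1 * w 0 + C2 * w 1 + C3 * (ε (w 0, w 2) + (w 1) ^ 2 / 2) + H (w 2))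
    (Rv : (Fin 3 → ℝ) → Fin 3 → Fin 3 → ℝ)
    (hRdef : ∀ w, Rv w = ![![1, Real.sqrt (εvv (w 0, w 2)), 0],
                           ![εvS (w 0, w 2), 0, -εvv (w 0, w 2)],
                           ![1, -Real.sqrt (εvv (w 0, w 2)), 0]]) :
    ∀ w, ∀ i j : Fin 3, i ≠ j → Rv w i ⬝ᵥ (hmat η w).mulVec (Rv w j) = 0 := by
  intro w i j hij
  obtain rfl : η = Euler.eta ε H C1 C2 C3 := funext hηdef
  rw [hRdef, Euler.hmat_eta C1 C2 C3 (hε.of_le (by norm_num)) hH, ← hεvv, ← hεvS]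
  exact Euler.frame_dotProduct_mulVec_eq_zero (hpv _).le hij
end
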